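/- Let M ∈ ℤ^{d×d} be regular, m := |det M|, C⁰ a positive definite reference stiffness with the usual symmetries, and let f := m^{−1/2} D_M be the normalized Dirichlet kernel. Then the periodised Green symbol coincides with the Green operator symbol on the generating set: Γ̂^p_h = m Σ_{z∈ℤ^d} Γ̂⁰_{h+M^Tz} |c_{h+M^Tz}(f)|² = Γ̂⁰_h for every h ∈ G(M^T). Hence the truncated-Fourier-series (Moulinec–Suquet) discretisation with Γ⁰ is the special case of the periodised Green operator for Dirichlet kernel translates. -/

import Mathlib

open MeasureTheory Complex Matrix
open scoped BigOperators Classical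

noncomputable section

namespace ElastFFT

variable (d : ℕ)

/-- Real action of an integer matrix on a real vector. -/
def mulVecR (M : Matrix (Fin d) (Fin d) ℤ) (y : Fin d → ℝ) : Fin d → ℝ :=
  (M.map (Int.cast : ℤ → ℝ)).mulVec y

/-- The lattice Λ(M) = M⁻¹ ℤ^d. -/
def lattice (M : Matrix (Fin d) (Fin d) ℤ) : Set (Fin d → ℝ) :=
  {y | ∃ z : Fin d → ℤ, mulVecR d M y = fun i => (z i : ℝ)}

/-- The pattern P(M) = Λ(M) ∩ [-1/2, 1/2)^d. -/
def pattern (M : Matrix (Fin d) (Fin d) ℤ) : Set (Fin d → ℝ) :=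
  {y | y ∈ lattice d M ∧ ∀ i, y i ∈ Set.Ico (-(1/2) : ℝ) (1/2)}

/-- The generating set G(N) = ℤ^d ∩ N·[-1/2,1/2)^d. -/
def genSet (N : Matrix (Fin d) (Fin d) ℤ) : Set (Fin d → ℤ) :=
  {h | ∃ y : Fin d → ℝ, (∀ i, y i ∈ Set.Ico (-(1/2) : ℝ) (1/2)) ∧
        (fun i => (h i : ℝ)) = mulVecR d N y}

/-- The fundamental cell [-π, π)^d of the torus. -/
def cube : Set (Fin d → ℝ) := Set.univ.pi fun _ => Set.Ico (-Real.pi) Real.pi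

/-- Pairing of an integer frequency and a real point. -/
def dot (k : Fin d → ℤ) (x : Fin d → ℝ) : ℝ := ∑ i, (k i : ℝ) * x i

/-- A function on the torus: 2π-periodic in each coordinate. -/
def TorusFun (f : (Fin d → ℝ) → ℂ) : Prop :=
  ∀ (x : Fin d → ℝ) (z : Fin d → ℤ), f (x + fun i => 2 * Real.pi * (z i : ℝ)) = f x

/-- The L²(𝕋^d) inner product (normalised). -/
def torusInner (f g : (Fin d → ℝ) → ℂ) : ℂ :=
  (((2 * Real.pi) ^ d : ℝ) : ℂ)⁻¹ * ∫ x in cube d, f x * (starRingEnd ℂ) (g x)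

/-- Fourier coefficient c_k(f). -/
def fCoeff (f : (Fin d → ℝ) → ℂ) (k : Fin d → ℤ) : ℂ :=
  torusInner d f fun x => Complex.exp (Complex.I * (dot d k x : ℝ))

/-- Membership in the Wiener algebra A(𝕋^d). -/
def InWiener (f : (Fin d → ℝ) → ℂ) : Prop :=
  Summable (fun k : Fin d → ℤ => ‖fCoeff d f k‖) ∧
    ∀ x, HasSum (fun k : Fin d → ℤ =>
      fCoeff d f k * Complex.exp (Complex.I * (dot d k x : ℝ))) (f x)

/-- The translate T(y)f = f(· - 2πy). -/
def Tr (y : Fin d → ℝ) (f : (Fin d → ℝ) → ℂ) : (Fin d → ℝ) → ℂ :=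
  fun x => f (x - (2 * Real.pi) • y)

/-- The space of translates V_M^f, as a set of L² functions (a.e. equality on the cube). -/
def spanTranslates (M : Matrix (Fin d) (Fin d) ℤ) (f : (Fin d → ℝ) → ℂ) :
    Set ((Fin d → ℝ) → ℂ) :=
  {g | ∃ a : (Fin d → ℝ) → ℂ,
      g =ᵐ[volume.restrict (cube d)] fun x => ∑ᶠ y ∈ pattern d M, a y * Tr d y f x}

/-- Orthonormality of the translates of f on the pattern. -/
def OrthonormalTranslates (M : Matrix (Fin d) (Fin d) ℤ) (f : (Fin d → ℝ) → ℂ) : Prop :=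
  ∀ y ∈ pattern d M, ∀ y' ∈ pattern d M,
    torusInner d (Tr d y f) (Tr d y' f) = if y = y' then 1 else 0

/-- A fundamental interpolant of V_M^f. -/
def IsFundamentalInterpolant (M : Matrix (Fin d) (Fin d) ℤ) (f Λ : (Fin d → ℝ) → ℂ) : Prop :=
  Λ ∈ spanTranslates d M f ∧
    ∀ y ∈ pattern d M,
      Λ ((2 * Real.pi) • y) = if ∃ z : Fin d → ℤ, y = fun i => (z i : ℝ) then 1 else 0

/-- Frobenius inner product of complex matrices. -/
def frobInner (A B : Matrix (Fin d) (Fin d) ℂ) : ℂ :=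
  ∑ i, ∑ j, A i j * (starRingEnd ℂ) (B i j)

/-- Application of a fourth-order (real) tensor to a complex matrix. -/
def capply (C : Fin d → Fin d → Fin d → Fin d → ℝ) (γ : Matrix (Fin d) (Fin d) ℂ) :
    Matrix (Fin d) (Fin d) ℂ :=
  Matrix.of fun i j => ∑ a, ∑ b, (C i j a b : ℂ) * γ a b

/-- The usual symmetries of a stiffness tensor. -/
def TensorSymm (C : Fin d → Fin d → Fin d → Fin d → ℝ) : Prop :=
  ∀ i j k l, C i j k l = C j i k l ∧ C i j k l = C i j l k ∧ C i j k l = C k l i j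

/-- Positive definiteness of a reference stiffness on symmetric matrices. -/
def TensorPosDef (C : Fin d → Fin d → Fin d → Fin d → ℝ) : Prop :=
  ∃ c : ℝ, 0 < c ∧ ∀ γ : Matrix (Fin d) (Fin d) ℂ, γ.IsSymm →
    c * ∑ i, ∑ j, Complex.normSq (γ i j) ≤ (frobInner d (capply d C γ) γ).re

/-- The symmetrised gradient D_k u = (i/2)(k uᵀ + u kᵀ). -/
def symGrad (k : Fin d → ℝ) (u : Fin d → ℂ) : Matrix (Fin d) (Fin d) ℂ :=
  Matrix.of fun i j => (Complex.I / 2) * ((k i : ℂ) * u j + u i * (k j : ℂ))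

/-- The adjoint D_k* of the symmetrised gradient (w.r.t. Frobenius inner product). -/
def symGradAdj (k : Fin d → ℝ) (A : Matrix (Fin d) (Fin d) ℂ) : Fin d → ℂ :=
  fun j => ∑ i, (-Complex.I / 2) * (k i : ℂ) * (A i j + A j i)

/-- The acoustic tensor A(k) = D_k* ∘ C⁰ ∘ D_k as a d×d complex matrix. -/
def acoustic (C0 : Fin d → Fin d → Fin d → Fin d → ℝ) (k : Fin d → ℝ) :
    Matrix (Fin d) (Fin d) ℂ :=
  Matrix.of fun i j => symGradAdj d k (capply d C0 (symGrad d k (Pi.single j 1))) i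

/-- The Green operator symbol Γ̂⁰_k = D_k ∘ A(k)⁻¹ ∘ D_k* for real k ≠ 0. -/
def greenSymR (C0 : Fin d → Fin d → Fin d → Fin d → ℝ) (k : Fin d → ℝ)
    (E : Matrix (Fin d) (Fin d) ℂ) : Matrix (Fin d) (Fin d) ℂ :=
  symGrad d k ((acoustic d C0 k)⁻¹.mulVec (symGradAdj d k E))

/-- The Green operator symbol for integer frequencies, Γ̂⁰_0 := 0. -/
def greenSymZ (C0 : Fin d → Fin d → Fin d → Fin d → ℝ) (k : Fin d → ℤ)
    (E : Matrix (Fin d) (Fin d) ℂ) : Matrix (Fin d) (Fin d) ℂ :=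
  if k = 0 then 0 else greenSymR d C0 (fun i => (k i : ℝ)) E

/-- Entrywise Fourier coefficient of a matrix field. -/
def mFourier (ε : (Fin d → ℝ) → Matrix (Fin d) (Fin d) ℂ) (k : Fin d → ℤ) :
    Matrix (Fin d) (Fin d) ℂ :=
  Matrix.of fun i j => fCoeff d (fun x => ε x i j) k

/-- The periodised Green symbol Γ̂^p_h = m Σ_z Γ̂⁰_{h+Mᵀz} |c_{h+Mᵀz}(f)|². -/
def gammaPSym (M : Matrix (Fin d) (Fin d) ℤ) (C0 : Fin d → Fin d → Fin d → Fin d → ℝ)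
    (f : (Fin d → ℝ) → ℂ) (h : Fin d → ℤ) (E : Matrix (Fin d) (Fin d) ℂ) :
    Matrix (Fin d) (Fin d) ℂ :=
  (M.det.natAbs : ℂ) • ∑' z : Fin d → ℤ,
    ((Complex.normSq (fCoeff d f (h + Matrix.mulVec Mᵀ z)) : ℝ) : ℂ) •
      greenSymZ d C0 (h + Matrix.mulVec Mᵀ z) E

/-- The periodised Green operator applied to a coefficient field: DFT, multiply, inverse DFT. -/
def gammaP (M : Matrix (Fin d) (Fin d) ℤ) (C0 : Fin d → Fin d → Fin d → Fin d → ℝ)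
    (f : (Fin d → ℝ) → ℂ) (V : (Fin d → ℝ) → Matrix (Fin d) (Fin d) ℂ)
    (x : Fin d → ℝ) : Matrix (Fin d) (Fin d) ℂ :=
  ((M.det.natAbs : ℂ))⁻¹ • ∑ᶠ h ∈ genSet d Mᵀ,
    Complex.exp (2 * Real.pi * Complex.I * (dot d h x : ℝ)) •
      gammaPSym d M C0 f h
        (∑ᶠ y ∈ pattern d M, Complex.exp (-(2 * Real.pi * Complex.I) * (dot d h y : ℝ)) • V y)

/-- The Dirichlet kernel D_M. -/
def dirichlet (M : Matrix (Fin d) (Fin d) ℤ) : (Fin d → ℝ) → ℂ :=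
  fun x => ∑ᶠ h ∈ genSet d Mᵀ, Complex.exp (Complex.I * (dot d h x : ℝ))


/-!
By orthogonality of the characters `x ↦ exp (i k·x)` on `[-π, π)^d`, the Fourier coefficients of
the Dirichlet kernel `D_M` are the indicator of `G(Mᵀ)`, so `|c_k(m^{-1/2} D_M)|² = 1/m` on
`G(Mᵀ)` and `0` elsewhere. As `G(Mᵀ)` meets each coset of `Mᵀℤ^d` at most once, for `h ∈ G(Mᵀ)`
only the term `z = 0` of the series defining `Γ̂^p_h` survives, and it equals `m · (1/m) · Γ̂⁰_h`.
-/

open Set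
open scoped Real ComplexConjugate

theorem setIntegral_univ_pi_prod {ι : Type*} [Fintype ι] (s : ι → Set ℝ) (g : ι → ℝ → ℂ) :
    ∫ x in univ.pi s, ∏ i, g i (x i) = ∏ i, ∫ t in s i, g i t := by
  rw [volume_pi, Measure.restrict_pi_pi]
  exact integral_fintype_prod_eq_prod g

theorem integral_Ico_neg_pi_pi_exp_I_mul_int_mul (n : ℤ) :
    ∫ t in Ico (-π) π, cexp (I * n * t) = if n = 0 then ((2 * π : ℝ) : ℂ) else 0 := by
  split_ifs with hn
  · simp [hn, Real.volume_real_Ico_of_le (by linarith [Real.pi_pos] : -π ≤ π)]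
    ring
  · have hc : I * n ≠ 0 := mul_ne_zero I_ne_zero (Int.cast_ne_zero.mpr hn)
    have hperiodic : cexp (I * n * π) = cexp (I * n * (-π : ℝ)) := by
      rw [show I * n * (π : ℂ) = I * n * ((-π : ℝ) : ℂ) + n * (2 * π * I) by push_cast; ring,
        exp_add, exp_int_mul_two_pi_mul_I, mul_one]
    rw [integral_Ico_eq_integral_Ioc, ← intervalIntegral.integral_of_le (by linarith [Real.pi_pos]),
      integral_exp_mul_complex hc, hperiodic, sub_self, zero_div]

@[fun_prop]
theorem continuous_dot (k : Fin d → ℤ) : Continuous (dot d k) := by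
  unfold dot; fun_prop

theorem integral_cube_exp_I_mul_dot (k : Fin d → ℤ) :
    ∫ x in cube d, cexp (I * dot d k x) = if k = 0 then (((2 * π) ^ d : ℝ) : ℂ) else 0 := by
  have hprod : ∀ x, cexp (I * dot d k x) = ∏ i, cexp (I * k i * x i) := fun x => by
    rw [← exp_sum, dot]; push_cast; rw [Finset.mul_sum]; simp only [mul_assoc]
  simp_rw [hprod]
  rw [cube, setIntegral_univ_pi_prod _ fun i t => cexp (I * k i * t)]
  simp_rw [integral_Ico_neg_pi_pi_exp_I_mul_int_mul]
  split_ifs with hk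
  · simp [hk]
  · obtain ⟨i, hi⟩ := Function.ne_iff.mp hk
    exact Finset.prod_eq_zero (Finset.mem_univ i) (if_neg hi)

theorem integrableOn_cube_of_continuous {g : (Fin d → ℝ) → ℂ} (hg : Continuous g) :
    IntegrableOn g (cube d) :=
  (hg.continuousOn.integrableOn_compact (isCompact_univ_pi fun _ => isCompact_Icc)).mono_set
    (pi_mono fun _ _ => Ico_subset_Icc_self)

theorem exp_I_mul_dot_mul_conj (h k : Fin d → ℤ) (x : Fin d → ℝ) :
    cexp (I * dot d h x) * conj (cexp (I * dot d k x)) = cexp (I * dot d (h - k) x) := by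
  rw [← exp_conj, ← exp_add]
  congr 1
  simp only [dot, Pi.sub_apply, Int.cast_sub, sub_mul, Finset.sum_sub_distrib, map_mul, conj_I,
    conj_ofReal]
  push_cast
  ring

theorem fCoeff_const_mul (c : ℂ) (g : (Fin d → ℝ) → ℂ) (k : Fin d → ℤ) :
    fCoeff d (fun x => c * g x) k = c * fCoeff d g k := by
  simp only [fCoeff, torusInner, mul_assoc, integral_const_mul]
  ring

theorem fCoeff_sum_exp_I_mul_dot (S : Finset (Fin d → ℤ)) (k : Fin d → ℤ) :
    fCoeff d (fun x => ∑ h ∈ S, cexp (I * dot d h x)) k = if k ∈ S then 1 else 0 := by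
  simp_rw [fCoeff, torusInner, Finset.sum_mul, exp_I_mul_dot_mul_conj]
  rw [integral_finsetSum _ fun h _ => integrableOn_cube_of_continuous d
    (by fun_prop : Continuous fun x => cexp (I * dot d (h - k) x))]
  simp_rw [integral_cube_exp_I_mul_dot, sub_eq_zero, Finset.sum_ite_eq']
  split_ifs <;> simp

theorem abs_le_of_mem_genSet {N : Matrix (Fin d) (Fin d) ℤ} {h : Fin d → ℤ}
    (hh : h ∈ genSet d N) (i : Fin d) : |h i| ≤ ∑ j, |N i j| := by
  obtain ⟨y, hy, hNy⟩ := hh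
  have hyi : ∀ j, |y j| ≤ 1 := fun j => abs_le.mpr ⟨by linarith [(hy j).1], by linarith [(hy j).2]⟩
  have hhi : (h i : ℝ) = ∑ j, (N i j : ℝ) * y j := by
    simpa [mulVecR, mulVec, dotProduct] using congrFun hNy i
  have : |(h i : ℝ)| ≤ ∑ j, |(N i j : ℝ)| := by
    rw [hhi]
    refine (Finset.abs_sum_le_sum_abs _ _).trans (Finset.sum_le_sum fun j _ => ?_)
    rw [abs_mul]
    exact mul_le_of_le_one_right (abs_nonneg _) (hyi j)
  exact_mod_cast this

theorem genSet_finite (N : Matrix (Fin d) (Fin d) ℤ) : (genSet d N).Finite :=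
  (Finite.pi fun i => finite_Icc (-∑ j, |N i j|) (∑ j, |N i j|)).subset
    fun _ hh i _ => abs_le.mp (abs_le_of_mem_genSet d hh i)

theorem fCoeff_dirichlet (M : Matrix (Fin d) (Fin d) ℤ) (k : Fin d → ℤ) :
    fCoeff d (dirichlet d M) k = if k ∈ genSet d Mᵀ then 1 else 0 := by
  have hfin := genSet_finite d Mᵀ
  have hD : dirichlet d M = fun x => ∑ h ∈ hfin.toFinset, cexp (I * dot d h x) :=
    funext fun x => finsum_mem_eq_finite_toFinset_sum _ hfin
  rw [hD, fCoeff_sum_exp_I_mul_dot]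
  simp only [Finite.mem_toFinset]

theorem normSq_fCoeff_const_mul_dirichlet (M : Matrix (Fin d) (Fin d) ℤ) (c : ℂ)
    (k : Fin d → ℤ) :
    normSq (fCoeff d (fun x => c * dirichlet d M x) k) =
      if k ∈ genSet d Mᵀ then normSq c else 0 := by
  rw [fCoeff_const_mul, fCoeff_dirichlet]
  split_ifs <;> simp

theorem mulVecR_intCast (N : Matrix (Fin d) (Fin d) ℤ) (z : Fin d → ℤ) :
    mulVecR d N (fun i => (z i : ℝ)) = fun i => ((N *ᵥ z) i : ℝ) :=
  funext fun i => ((Int.castRingHom ℝ).map_mulVec N z i).symm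

-- uniqueness half of: `genSet d N` is a system of representatives of `ℤ^d / N ℤ^d`
theorem eq_zero_of_add_mulVec_mem_genSet {N : Matrix (Fin d) (Fin d) ℤ} (hN : N.det ≠ 0)
    {h z : Fin d → ℤ} (hh : h ∈ genSet d N) (hhz : h + N *ᵥ z ∈ genSet d N) : z = 0 := by
  obtain ⟨y, hy, hNy⟩ := hh
  obtain ⟨y', hy', hNy'⟩ := hhz
  have hdet : (N.map (Int.cast : ℤ → ℝ)).det ≠ 0 := by
    rw [show N.map (Int.cast : ℤ → ℝ) = (Int.castRingHom ℝ).mapMatrix N from rfl,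
      ← RingHom.map_det]
    exact Int.cast_ne_zero.mpr hN
  have hyy' : y' = y + fun i => (z i : ℝ) := by
    refine mulVec_injective_of_det_ne_zero hdet ?_
    change mulVecR d N y' = mulVecR d N _
    rw [← hNy', mulVecR, mulVec_add, ← mulVecR, ← mulVecR, ← hNy, mulVecR_intCast]
    ext i; simp
  funext i
  have hyi := hy i
  have hy'i := hy' i
  rw [hyy'] at hy'i
  simp only [Pi.add_apply, mem_Ico] at hyi hy'i
  have : -1 < (z i : ℝ) ∧ (z i : ℝ) < 1 := ⟨by linarith, by linarith⟩
  have : -1 < z i ∧ z i < 1 := by exact_mod_cast this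
  simp only [Pi.zero_apply]; omega

theorem gammaPSym_dirichlet_eq_greenSym_general
    (d : ℕ)
    (M : Matrix (Fin d) (Fin d) ℤ) (hM : M.det ≠ 0)
    (C0 : Fin d → Fin d → Fin d → Fin d → ℝ) :
    ∀ h ∈ genSet d Mᵀ, ∀ E : Matrix (Fin d) (Fin d) ℂ,
      gammaPSym d M C0
        (fun x => ((Real.sqrt (M.det.natAbs) : ℝ) : ℂ)⁻¹ * dirichlet d M x) h E =
      greenSymZ d C0 h E := by
  intro h hh E
  have hm : (M.det.natAbs : ℝ) ≠ 0 := by exact_mod_cast Int.natAbs_ne_zero.mpr hM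
  have hnormSq : normSq (((Real.sqrt (M.det.natAbs) : ℝ) : ℂ)⁻¹) = (M.det.natAbs : ℝ)⁻¹ := by
    rw [map_inv₀, normSq_ofReal, Real.mul_self_sqrt (Nat.cast_nonneg _)]
  rw [gammaPSym, tsum_eq_single 0 fun z hz => ?_]
  · rw [mulVec_zero, add_zero, normSq_fCoeff_const_mul_dirichlet, if_pos hh, hnormSq, smul_smul]
    push_cast
    rw [mul_inv_cancel₀ (by exact_mod_cast hm), one_smul]
  · have hhz : h + Mᵀ *ᵥ z ∉ genSet d Mᵀ := fun hhz =>
      hz (eq_zero_of_add_mulVec_mem_genSet d (by rwa [det_transpose]) hh hhz)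
    rw [normSq_fCoeff_const_mul_dirichlet, if_neg hhz, ofReal_zero, zero_smul]

/-- for the normalised Dirichlet kernel the periodised Green symbol
coincides with the Green operator symbol on the generating set. -/
theorem gammaPSym_dirichlet_eq_greenSym
    (d : ℕ) (hd : 0 < d)
    (M : Matrix (Fin d) (Fin d) ℤ) (hM : M.det ≠ 0)
    (C0 : Fin d → Fin d → Fin d → Fin d → ℝ)
    (hC0symm : TensorSymm d C0) (hC0pos : TensorPosDef d C0) :
    ∀ h ∈ genSet d Mᵀ, ∀ E : Matrix (Fin d) (Fin d) ℂ,
      gammaPSym d M C0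
        (fun x => ((Real.sqrt (M.det.natAbs) : ℝ) : ℂ)⁻¹ * dirichlet d M x) h E =
      greenSymZ d C0 h E :=
  gammaPSym_dirichlet_eq_greenSym_general d M hM C0

end ElastFFT
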